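/- arXiv:2301.09477 — 4 statements merged into one kernel-verified Lean document; each statement's English description precedes it below -/
import Mathlib

section
/- Let H be a nonempty finite family of functions from a type α to a type β that is universal with parameter m (a positive real number), and let R be a finite subset of α with |R| = r. Then the number of functions h ∈ H that have a collision on R is at most |H| · r(r−1)/(2m). Equivalently, a uniformly random h ∈ H is injective on R with probability at least 1 − r(r−1)/(2m). -/
/-- For a nonempty finite family `H` of functions `α → β` that is
universal with parameter `m > 0`, and a finite set `R ⊆ α` with `|R| = r`, the number
of `h ∈ H` having a collision on `R` is at most `|H| · r(r−1)/(2m)`; equivalently, the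
number of `h ∈ H` injective on `R` is at least `|H| · (1 − r(r−1)/(2m))`. -/
theorem stmt_0 {α β : Type*} [DecidableEq α] [DecidableEq β]
    (H : Finset (α → β)) (hH : H.Nonempty) (m : ℝ) (hm : 0 < m)
    (huniv : ∀ x y : α, x ≠ y →
      ((H.filter fun h => h x = h y).card : ℝ) ≤ (H.card : ℝ) / m)
    (R : Finset α) (r : ℕ) (hr : R.card = r) :
    ((H.filter fun h => ∃ x ∈ R, ∃ y ∈ R, x ≠ y ∧ h x = h y).card : ℝ)
        ≤ (H.card : ℝ) * ((r : ℝ) * ((r : ℝ) - 1) / (2 * m)) ∧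
    (H.card : ℝ) * (1 - (r : ℝ) * ((r : ℝ) - 1) / (2 * m))
        ≤ ((H.filter fun h => ∀ x ∈ R, ∀ y ∈ R, h x = h y → x = y).card : ℝ) := by
  classical
  set C := H.filter fun h => ∃ x ∈ R, ∃ y ∈ R, x ≠ y ∧ h x = h y with hC
  -- double counting
  have hswap : ∑ p ∈ R.offDiag, (H.filter fun h => h p.1 = h p.2).card
      = ∑ h ∈ H, ((R.offDiag).filter fun p => h p.1 = h p.2).card := by
    simp only [Finset.card_filter]
    rw [Finset.sum_comm]
  have hlower : 2 * C.card ≤ ∑ p ∈ R.offDiag, (H.filter fun h => h p.1 = h p.2).card := by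
    rw [hswap]
    calc 2 * C.card = ∑ _h ∈ C, 2 := by rw [Finset.sum_const, smul_eq_mul, mul_comm]
    _ ≤ ∑ h ∈ C, ((R.offDiag).filter fun p => h p.1 = h p.2).card := by
        apply Finset.sum_le_sum
        intro h hh
        simp only [hC, Finset.mem_filter] at hh
        obtain ⟨_, x, hx, y, hy, hxy, hcol⟩ := hh
        have hsub : ({(x, y), (y, x)} : Finset (α × α)) ⊆
            (R.offDiag).filter fun p => h p.1 = h p.2 := by
          intro p hp
          simp only [Finset.mem_insert, Finset.mem_singleton] at hp
          rcases hp with rfl | rfl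
          · exact Finset.mem_filter.2 ⟨Finset.mem_offDiag.2 ⟨hx, hy, hxy⟩, hcol⟩
          · exact Finset.mem_filter.2 ⟨Finset.mem_offDiag.2 ⟨hy, hx, hxy.symm⟩, hcol.symm⟩
        have := Finset.card_le_card hsub
        have hcard2 : ({(x, y), (y, x)} : Finset (α × α)).card = 2 := by
          rw [Finset.card_insert_of_notMem, Finset.card_singleton]
          intro hmem
          rw [Finset.mem_singleton, Prod.mk.injEq] at hmem
          exact hxy hmem.1
        exact hcard2 ▸ this
    _ ≤ ∑ h ∈ H, ((R.offDiag).filter fun p => h p.1 = h p.2).card :=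
        Finset.sum_le_sum_of_subset (Finset.filter_subset _ _)
  have hupper : (∑ p ∈ R.offDiag, ((H.filter fun h => h p.1 = h p.2).card : ℝ))
      ≤ (r : ℝ) * ((r : ℝ) - 1) * ((H.card : ℝ) / m) := by
    calc (∑ p ∈ R.offDiag, ((H.filter fun h => h p.1 = h p.2).card : ℝ))
        ≤ ∑ _p ∈ R.offDiag, ((H.card : ℝ) / m) := by
          apply Finset.sum_le_sum
          intro p hp
          rw [Finset.mem_offDiag] at hp
          exact huniv p.1 p.2 hp.2.2
    _ = (R.offDiag.card : ℝ) * ((H.card : ℝ) / m) := by rw [Finset.sum_const, nsmul_eq_mul]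
    _ = (r : ℝ) * ((r : ℝ) - 1) * ((H.card : ℝ) / m) := by
        rw [Finset.offDiag_card, hr]
        rcases Nat.eq_zero_or_pos r with rfl | hrpos
        · simp
        · have hle2 : r ≤ r * r := Nat.le_mul_of_pos_left r hrpos
          rw [Nat.cast_sub hle2]
          push_cast
          ring
  have hmain : (C.card : ℝ) ≤ (H.card : ℝ) * ((r : ℝ) * ((r : ℝ) - 1) / (2 * m)) := by
    have h1 : (2 : ℝ) * C.card ≤ (r : ℝ) * ((r : ℝ) - 1) * ((H.card : ℝ) / m) := by
      calc (2 : ℝ) * C.card = ((2 * C.card : ℕ) : ℝ) := by push_cast; ring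
      _ ≤ ((∑ p ∈ R.offDiag, (H.filter fun h => h p.1 = h p.2).card : ℕ) : ℝ) := by
          exact_mod_cast hlower
      _ = ∑ p ∈ R.offDiag, ((H.filter fun h => h p.1 = h p.2).card : ℝ) := by push_cast; rfl
      _ ≤ _ := hupper
    have heq : (H.card : ℝ) * ((r : ℝ) * ((r : ℝ) - 1) / (2 * m))
        = (r : ℝ) * ((r : ℝ) - 1) * ((H.card : ℝ) / m) / 2 := by
      field_simp
    rw [heq]
    linarith
  refine ⟨hmain, ?_⟩
  have hcompl : (H.filter fun h => ∀ x ∈ R, ∀ y ∈ R, h x = h y → x = y).card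
      = H.card - C.card := by
    have hiff : ∀ h ∈ H, ((∀ x ∈ R, ∀ y ∈ R, h x = h y → x = y) ↔
        ¬ ∃ x ∈ R, ∃ y ∈ R, x ≠ y ∧ h x = h y) := by
      intro h _
      constructor
      · rintro hinj ⟨x, hx, y, hy, hne, heq⟩; exact hne (hinj x hx y hy heq)
      · intro hno x hx y hy heq
        by_contra hne
        exact hno ⟨x, hx, y, hy, hne, heq⟩
    rw [hC, Finset.filter_congr hiff, Finset.filter_not,
      Finset.card_sdiff_of_subset (Finset.filter_subset _ _)]
  rw [hcompl]
  have hle : C.card ≤ H.card := Finset.card_le_card (Finset.filter_subset _ _)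
  rw [Nat.cast_sub hle]
  nlinarith [hmain]
end

section
/- Let 0 = c₀ < c₁ < ⋯ < c_k = n be cut positions and m ≥ 1, and let p be an index with 1 ≤ p ≤ k−1 such that c_j − c_{j−1} ≥ m for all 1 ≤ j ≤ p and c_j − c_{j−1} ≤ m − 1 for all p+1 ≤ j ≤ k. Then for every a with a + m ≤ n, the occurrence [a, a+m) crosses some boundary (there exists j with 1 ≤ j ≤ k−1 and a < c_j < a + m) if and only if either (i) there exists j with 1 ≤ j ≤ p−1 and a < c_j < a + m, or (ii) c_p − (m − 1) ≤ a. Moreover, conditions (i) and (ii) are mutually exclusive, so the set of boundary-crossing occurrences is the disjoint union of the occurrences crossing one of the boundaries c₁, …, c_{p−1} and the occurrences contained in the suffix [c_p − (m − 1), n). -/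
lemma stmt7_mono {k : ℕ} {c : ℕ → ℕ} (hmono : ∀ j < k, c j < c (j + 1)) :
    ∀ i j, i ≤ j → j ≤ k → c i ≤ c j := by
  intro i j hij hjk
  induction j with
  | zero => simp [Nat.le_zero.mp hij]
  | succ j ih =>
    rcases Nat.lt_or_ge i (j+1) with h | h
    · exact (ih (Nat.lt_succ_iff.mp h) (by omega)).trans (hmono j (by omega)).le
    · have : i = j+1 := le_antisymm hij h
      simp [this]

/-- With cut positions `0 = c 0 < ⋯ < c k = n`, `m ≥ 1`, and an index
`1 ≤ p ≤ k−1` such that segments `1, …, p` have length at least `m` and segments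
`p+1, …, k` have length at most `m − 1`, an occurrence `[a, a+m)` with `a + m ≤ n`
crosses some boundary if and only if (i) it crosses one of `c 1, …, c (p−1)`, or
(ii) `c p − (m − 1) ≤ a`; moreover (i) and (ii) are mutually exclusive. -/
theorem stmt_7 (n k : ℕ) (c : ℕ → ℕ) (m : ℕ) (hm : 1 ≤ m)
    (hc0 : c 0 = 0) (hck : c k = n)
    (hmono : ∀ j < k, c j < c (j + 1))
    (p : ℕ) (hp1 : 1 ≤ p) (hpk : p ≤ k - 1)
    (hbig : ∀ j, 1 ≤ j → j ≤ p → m ≤ c j - c (j - 1))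
    (hsmall : ∀ j, p + 1 ≤ j → j ≤ k → c j - c (j - 1) ≤ m - 1) :
    ∀ a, a + m ≤ n →
      ((∃ j, 1 ≤ j ∧ j ≤ k - 1 ∧ a < c j ∧ c j < a + m) ↔
        ((∃ j, 1 ≤ j ∧ j ≤ p - 1 ∧ a < c j ∧ c j < a + m) ∨ c p - (m - 1) ≤ a)) ∧
      ¬ ((∃ j, 1 ≤ j ∧ j ≤ p - 1 ∧ a < c j ∧ c j < a + m) ∧ c p - (m - 1) ≤ a) := by
  intro a ha
  have hkp : p + 1 ≤ k := by omega
  constructor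
  · constructor
    · rintro ⟨j, hj1, hjk1, haj, hja⟩
      by_cases hjp : j ≤ p - 1
      · exact Or.inl ⟨j, hj1, hjp, haj, hja⟩
      · have hpj : p ≤ j := by omega
        have hcp : c p ≤ c j := stmt7_mono hmono p j hpj (by omega)
        right; omega
    · rintro (⟨j, hj1, hjp1, haj, hja⟩ | hii)
      · exact ⟨j, hj1, by omega, haj, hja⟩
      · -- c p ≤ a + (m-1); find minimal j with a < c j
        have hex : ∃ j, a < c j := ⟨k, by omega⟩
        set j := Nat.find hex with hjdef
        have haj : a < c j := Nat.find_spec hex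
        have hjk : j ≤ k := Nat.find_le (by omega)
        have hj1 : 1 ≤ j := by
          rcases Nat.eq_zero_or_pos j with h | h
          · rw [h] at haj; omega
          · exact h
        have hprev : ¬ a < c (j - 1) := Nat.find_min hex (by omega)
        have hcpm : c p ≤ a + (m - 1) := by omega
        by_cases hjp : j ≤ p
        · have hcj : c j ≤ c p := stmt7_mono hmono j p hjp (by omega)
          exact ⟨j, hj1, by omega, haj, by omega⟩
        · have hs : c j - c (j - 1) ≤ m - 1 := hsmall j (by omega) hjk
          have hmn : c (j-1) ≤ c j := stmt7_mono hmono (j-1) j (by omega) hjk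
          have hja : c j < a + m := by omega
          have hjne : j ≠ k := by
            intro h; rw [h, hck] at hja; omega
          exact ⟨j, hj1, by omega, haj, hja⟩
  · rintro ⟨⟨j, hj1, hjp1, haj, hja⟩, hii⟩
    have h1 : c j ≤ c (p - 1) := stmt7_mono hmono j (p-1) hjp1 (by omega)
    have h2 : m ≤ c p - c (p - 1) := hbig p hp1 le_rfl
    have h3 : c (p-1) ≤ c p := stmt7_mono hmono (p-1) p (by omega) (by omega)
    omega
end

section
/- Let σ₀ = [] and σ_n = step(σ_{n−1}) for n ≥ 1 in the deamortized log-structured merging process. For every n ≥ 1 the following holds: whenever the entry at position q (0-indexed from the left) of complete(σ_{n−1}) was produced by the merging clause of complete (that is, it arose as (e+1, 0) from an adjacent pair whose right member had counter 1 and exponent e), then, writing i = e + 1 for its exponent, the list complete(σ_{n−1}) ++ [(0,0)] has exactly q + 1 + i entries, and the entries at positions q+1, q+2, …, q+i have exponents i−1, i−2, …, 1, 0, respectively. Since start changes neither the length nor the exponents of a configuration, the same holds for the configuration σ_n. (In the paper's terms: when the construction of a segment of size 2^i finishes, there is exactly one segment of each size 2^{i−1}, …, 2^0 to its right.) -/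
/-- `complete` on configurations: `complete [] = []`;
`complete ((e₁,c₁) :: (e₂,1) :: L) = (e₂+1, 0) :: complete L` when the list has at
least two entries and the second entry has counter exactly `1`; in all other cases
`complete ((e,c) :: L) = (e, c - 1) :: complete L` (truncated subtraction). -/
def complete : List (ℕ × ℕ) → List (ℕ × ℕ)
  | [] => []
  | [(e, c)] => [(e, c - 1)]
  | (e₁, c₁) :: (e₂, c₂) :: L =>
    if c₂ = 1 then (e₂ + 1, 0) :: complete L
    else (e₁, c₁ - 1) :: complete ((e₂, c₂) :: L)

/-- The marked version of `complete`: it computes exactly the same output entries,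
additionally tagging with `true` precisely those entries produced by the merging
clause (i.e. those that arose as `(e+1, 0)` from an adjacent pair whose right member
had counter `1` and exponent `e`). -/
def completeM : List (ℕ × ℕ) → List ((ℕ × ℕ) × Bool)
  | [] => []
  | [(e, c)] => [((e, c - 1), false)]
  | (e₁, c₁) :: (e₂, c₂) :: L =>
    if c₂ = 1 then ((e₂ + 1, 0), true) :: completeM L
    else ((e₁, c₁ - 1), false) :: completeM ((e₂, c₂) :: L)

/-- `start` on configurations: `start [] = []`;
`start ((e,0) :: (e,0) :: L) = (e,0) :: (e, 2^e) :: start L` when the first two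
entries have equal exponents and both counters zero; in all other cases
`start (x :: L) = x :: start L`. -/
def start : List (ℕ × ℕ) → List (ℕ × ℕ)
  | [] => []
  | [x] => [x]
  | (e₁, c₁) :: (e₂, c₂) :: L =>
    if e₁ = e₂ ∧ c₁ = 0 ∧ c₂ = 0 then (e₁, 0) :: (e₁, 2 ^ e₁) :: start L
    else (e₁, c₁) :: start ((e₂, c₂) :: L)

/-- One step of the deamortized log-structured merging process. -/
def step (σ : List (ℕ × ℕ)) : List (ℕ × ℕ) := start (complete σ ++ [(0, 0)])

/-- The configuration after `n` characters: `σ₀ = []`, `σ_n = step σ_{n-1}`. -/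
def conf : ℕ → List (ℕ × ℕ)
  | 0 => []
  | n + 1 => step (conf n)

/-! ### Auxiliary machinery -/

/-- Explicit closed form: `g k m = conf (2^(k+1) - 1 + m)` for `m < 2^(k+1)`. -/
def g : ℕ → ℕ → List (ℕ × ℕ)
  | 0, m => if m = 0 then [(0, 0)] else [(0, 0), (0, 1)]
  | (k+1), m =>
    if m < 2 ^ (k+1) then (k+1, 0) :: g k m
    else (k+1, 0) :: (k+1, 2 ^ (k+2) - m) :: g k (m - 2 ^ (k+1))

/-- `trueDesc j = [((j,0),true), ((j-1,0),true), …, ((1,0),true)]`. -/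
def trueDesc : ℕ → List ((ℕ × ℕ) × Bool)
  | 0 => []
  | j+1 => ((j+1, 0), true) :: trueDesc j

/-- `zdesc j = [(j,0), (j-1,0), …, (0,0)]`. -/
def zdesc : ℕ → List (ℕ × ℕ)
  | 0 => [(0, 0)]
  | j+1 => (j+1, 0) :: zdesc j

lemma g_head (k m : ℕ) : ∃ t, g k m = (k, 0) :: t := by
  cases k with
  | zero => by_cases h : m = 0 <;> simp [g, h]
  | succ k => by_cases h : m < 2 ^ (k+1) <;> simp [g, h]

lemma complete_eq_map_completeM (l : List (ℕ × ℕ)) :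
    complete l = (completeM l).map Prod.fst := by
  induction l using complete.induct with
  | case1 => rfl
  | case2 e c => rfl
  | case3 e₁ c₁ e₂ L ih => simp [complete, completeM, ih]
  | case4 e₁ c₁ e₂ c₂ L h ih => simp [complete, completeM, h, ih]

lemma start_map_fst (l : List (ℕ × ℕ)) :
    (start l).map Prod.fst = l.map Prod.fst := by
  induction l using start.induct with
  | case1 => rfl
  | case2 x => rfl
  | case3 e₁ c₁ e₂ c₂ L h ih =>
      obtain ⟨h1, h2, h3⟩ := h
      subst h1 h2 h3
      simp [start, ih]
  | case4 e₁ c₁ e₂ c₂ L h ih => simp [start, h, ih]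

lemma start_length (l : List (ℕ × ℕ)) : (start l).length = l.length := by
  have := congrArg List.length (start_map_fst l)
  simpa using this

lemma completeM_cascade (k : ℕ) :
    completeM (g k (2 ^ (k+1) - 1)) = trueDesc (k+1) := by
  induction k with
  | zero => simp [g, completeM, trueDesc]
  | succ k ih =>
      have h2 : 2 ^ (k+2) = 2 ^ (k+1) + 2 ^ (k+1) := by ring
      have hpos : 0 < 2 ^ (k+1) := Nat.pow_pos (by norm_num)
      have hm : ¬ (2 ^ (k+2) - 1 < 2 ^ (k+1)) := by omega
      have hc : 2 ^ (k+2) - (2 ^ (k+2) - 1) = 1 := by omega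
      have harg : 2 ^ (k+2) - 1 - 2 ^ (k+1) = 2 ^ (k+1) - 1 := by omega
      rw [g]
      rw [if_neg hm, hc, harg]
      simp [completeM, ih, trueDesc]

lemma zdesc_eq_g_zero (k : ℕ) : g k 0 = zdesc k := by
  induction k with
  | zero => simp [g, zdesc]
  | succ k ih => simp [g, zdesc, Nat.pow_pos, ih]

lemma trueDesc_fst_append (j : ℕ) :
    (trueDesc j).map Prod.fst ++ [((0 : ℕ), (0 : ℕ))] = zdesc j := by
  induction j with
  | zero => rfl
  | succ j ih => simp [trueDesc, zdesc] at ih ⊢; exact ih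

lemma start_zdesc (k : ℕ) : start (zdesc k) = zdesc k := by
  induction k with
  | zero => rfl
  | succ k ih =>
      cases k with
      | zero => simp [zdesc, start]
      | succ k =>
          have : zdesc (k+1) = (k+1, 0) :: zdesc k := rfl
          rw [zdesc, this, start, if_neg (by omega)]
          rw [← this, ih]

lemma complete_g_head (k m : ℕ) (h : m + 1 < 2 ^ (k+1)) :
    ∃ t, complete (g k m) = (k, 0) :: t := by
  cases k with
  | zero =>
      have hm0 : m = 0 := by norm_num at h; omega
      subst hm0
      simp [g, complete]
  | succ k =>
      by_cases hm : m < 2 ^ (k+1)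
      · obtain ⟨t, ht⟩ := g_head k m
        rw [g, if_pos hm, ht, complete, if_neg (by norm_num)]
        exact ⟨_, rfl⟩
      · have h2 : 2 ^ (k+2) = 2 ^ (k+1) + 2 ^ (k+1) := by ring
        have hc : 2 ^ (k+2) - m ≠ 1 := by omega
        obtain ⟨t, ht⟩ := g_head k (m - 2 ^ (k+1))
        rw [g, if_neg hm, complete, if_neg hc]
        exact ⟨_, rfl⟩

lemma step_g (k : ℕ) : ∀ m, m < 2 ^ (k+1) →
    step (g k m) = if m + 1 < 2 ^ (k+1) then g k (m+1) else g (k+1) 0 := by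
  induction k with
  | zero =>
      intro m hm
      interval_cases m
      · show step [(0,0)] = _
        simp [step, complete, start, g]
      · show step [(0,0),(0,1)] = _
        norm_num [step, complete, start, g]
  | succ k ih =>
      intro m hm
      have h2 : 2 ^ (k+2) = 2 ^ (k+1) + 2 ^ (k+1) := by ring
      have hpos : 0 < 2 ^ (k+1) := Nat.pow_pos (by norm_num)
      by_cases hA : m + 1 < 2 ^ (k+1)
      · -- Case A
        obtain ⟨t₀, ht₀⟩ := g_head k m
        obtain ⟨t₁, ht₁⟩ := complete_g_head k m hA
        have hgm : g (k+1) m = (k+1, 0) :: g k m := by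
          rw [g, if_pos (by omega)]
        have hcomp : complete (g (k+1) m) = (k+1, 0) :: complete (g k m) := by
          rw [hgm, ht₀, complete, if_neg (by norm_num), ← ht₀]
        have : step (g (k+1) m) = (k+1, 0) :: step (g k m) := by
          rw [step, hcomp, List.cons_append, ht₁, List.cons_append, start,
            if_neg (by omega), ← List.cons_append, ← ht₁, step]
        rw [this, ih m (by omega), if_pos hA, if_pos (by omega), g, if_pos (by omega)]
      · by_cases hB : m < 2 ^ (k+1)
        · -- Case B : m + 1 = 2^(k+1)
          have hmB : m = 2 ^ (k+1) - 1 := by omega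
          obtain ⟨t₀, ht₀⟩ := g_head k m
          have hgm : g (k+1) m = (k+1, 0) :: g k m := by
            rw [g, if_pos (by omega)]
          have hcomp : complete (g (k+1) m) = (k+1, 0) :: complete (g k m) := by
            rw [hgm, ht₀, complete, if_neg (by norm_num), ← ht₀]
          have hcm : complete (g k m) = (trueDesc (k+1)).map Prod.fst := by
            rw [complete_eq_map_completeM, hmB, completeM_cascade]
          have hz : complete (g k m) ++ [((0:ℕ),(0:ℕ))] = zdesc (k+1) := by
            rw [hcm, trueDesc_fst_append]
          have hz' : zdesc (k+1) = (k+1, 0) :: zdesc k := rfl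
          rw [step, hcomp, List.cons_append, hz, hz', start,
            if_pos (by exact ⟨rfl, rfl, rfl⟩), start_zdesc]
          rw [if_pos (by omega), g, if_neg (by omega)]
          rw [show 2 ^ (k+1+1) - (m+1) = 2 ^ (k+1) by omega,
            show m + 1 - 2 ^ (k+1) = 0 by omega, zdesc_eq_g_zero]
        · -- m ≥ 2^(k+1)
          set c := 2 ^ (k+2) - m with hc
          set m' := m - 2 ^ (k+1) with hm'
          have hgm : g (k+1) m = (k+1, 0) :: (k+1, c) :: g k m' := by
            rw [g, if_neg hB]
          by_cases hC : c = 1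
          · -- Case C : m = 2^(k+2) - 1
            have hmC : m = 2 ^ (k+2) - 1 := by omega
            have hm'C : m' = 2 ^ (k+1) - 1 := by omega
            have hcomp : complete (g (k+1) m) =
                (trueDesc (k+2)).map Prod.fst := by
              rw [complete_eq_map_completeM, hmC, completeM_cascade]
            have hzz : zdesc (k+2) = (k+2, 0) :: (k+1, 0) :: zdesc k := rfl
            rw [step, hcomp, trueDesc_fst_append, hzz, start, if_neg (by omega),
              show ((k+1, 0) :: zdesc k : List (ℕ × ℕ)) = zdesc (k+1) from rfl,
              start_zdesc, if_neg (by omega), g, if_pos (by positivity),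
              zdesc_eq_g_zero]
          · -- Case D : c ≥ 2
            have hc2 : 2 ≤ c := by omega
            have hm'D : m' + 1 < 2 ^ (k+1) := by omega
            obtain ⟨t₀, ht₀⟩ := g_head k m'
            obtain ⟨t₁, ht₁⟩ := complete_g_head k m' hm'D
            have hcomp : complete (g (k+1) m) =
                (k+1, 0) :: (k+1, c - 1) :: complete (g k m') := by
              rw [hgm, complete, if_neg hC, ht₀, complete, if_neg (by norm_num), ← ht₀]
            have hstep : step (g (k+1) m) = (k+1, 0) :: (k+1, c-1) :: step (g k m') := by
              rw [step, hcomp, List.cons_append, List.cons_append, start,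
                if_neg (by omega), ht₁, List.cons_append, start, if_neg (by omega),
                ← List.cons_append, ← ht₁, step]
            rw [hstep, ih m' (by omega), if_pos hm'D, if_pos (by omega), g, if_neg (by omega)]
            rw [show 2 ^ (k+1+1) - (m+1) = c - 1 by omega,
              show m + 1 - 2 ^ (k+1) = m' + 1 by omega]

lemma conf_char (n : ℕ) (hn : 1 ≤ n) :
    ∃ k m, m < 2 ^ (k+1) ∧ conf n = g k m := by
  induction n with
  | zero => omega
  | succ n ih =>
      cases n with
      | zero =>
          refine ⟨0, 0, by norm_num, ?_⟩
          show step [] = g 0 0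
          simp [step, complete, start, g]
      | succ n =>
          obtain ⟨k, m, hm, hc⟩ := ih (by omega)
          have : conf (n+1+1) = step (g k m) := by rw [conf, hc]
          rw [this, step_g k m hm]
          by_cases h : m + 1 < 2 ^ (k+1)
          · exact ⟨k, m+1, h, by rw [if_pos h]⟩
          · exact ⟨k+1, 0, by positivity, by rw [if_neg h]⟩

lemma completeM_g (k : ℕ) : ∀ m, m < 2 ^ (k+1) →
    ∃ (A : List (ℕ × ℕ)) (j : ℕ),
      completeM (g k m) = A.map (fun p => (p, false)) ++ trueDesc j := by
  induction k with
  | zero =>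
      intro m hm
      have hm2 : m = 0 ∨ m = 1 := by norm_num at hm; omega
      rcases hm2 with rfl | rfl
      · exact ⟨[(0,0)], 0, by simp [g, completeM, trueDesc]⟩
      · exact ⟨[], 1, by simp [g, completeM, trueDesc]⟩
  | succ k ih =>
      intro m hm
      have h2 : 2 ^ (k+2) = 2 ^ (k+1) + 2 ^ (k+1) := by ring
      have hpos : 0 < 2 ^ (k+1) := Nat.pow_pos (by norm_num)
      by_cases hB : m < 2 ^ (k+1)
      · obtain ⟨t₀, ht₀⟩ := g_head k m
        obtain ⟨A, j, hAj⟩ := ih m hB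
        refine ⟨(k+1, 0) :: A, j, ?_⟩
        rw [g, if_pos hB, ht₀, completeM, if_neg (by norm_num), ← ht₀, hAj]
        simp
      · set c := 2 ^ (k+2) - m with hc
        set m' := m - 2 ^ (k+1) with hm'
        have hgm : g (k+1) m = (k+1, 0) :: (k+1, c) :: g k m' := by
          rw [g, if_neg hB]
        by_cases hC : c = 1
        · have hm'C : m' = 2 ^ (k+1) - 1 := by omega
          refine ⟨[], k+2, ?_⟩
          rw [hgm, completeM, if_pos hC, hm'C, completeM_cascade]
          simp [trueDesc]
        · obtain ⟨t₀, ht₀⟩ := g_head k m'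
          obtain ⟨A, j, hAj⟩ := ih m' (by omega)
          refine ⟨(k+1, 0) :: (k+1, c-1) :: A, j, ?_⟩
          rw [hgm, completeM, if_neg hC, ht₀, completeM, if_neg (by norm_num), ← ht₀, hAj]
          simp

lemma trueDesc_length (j : ℕ) : (trueDesc j).length = j := by
  induction j with
  | zero => rfl
  | succ j ih => simp [trueDesc, ih]

lemma trueDesc_getElem? (j r : ℕ) (hr : r < j) :
    (trueDesc j)[r]? = some ((j - r, 0), true) := by
  induction j generalizing r with
  | zero => omega
  | succ j ih =>
      cases r with
      | zero => simp [trueDesc]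
      | succ r =>
          rw [trueDesc, List.getElem?_cons_succ, ih r (by omega), Nat.add_sub_add_right]

lemma zdesc_length (j : ℕ) : (zdesc j).length = j + 1 := by
  induction j with
  | zero => rfl
  | succ j ih => simp [zdesc, ih]

lemma zdesc_fst_getElem? (j r : ℕ) (hr : r < j + 1) :
    ((zdesc j).map Prod.fst)[r]? = some (j - r) := by
  induction j generalizing r with
  | zero =>
      interval_cases r
      · rfl
  | succ j ih =>
      cases r with
      | zero => simp [zdesc]
      | succ r =>
          rw [zdesc, List.map_cons, List.getElem?_cons_succ, ih r (by omega)]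
          congr 1
          omega

/-- For every `n ≥ 1`, whenever the entry at position `q` of
`complete (σ_{n-1})` was produced by the merging clause (arising as `(e+1, 0)`), then,
writing `i = e + 1` for its exponent, the list `complete (σ_{n-1}) ++ [(0,0)]` has
exactly `q + 1 + i` entries whose exponents at positions `q+1, …, q+i` are
`i−1, i−2, …, 0`; and since `start` changes neither length nor exponents, the same
holds for `σ_n`. -/
theorem stmt_11 (n : ℕ) (hn : 1 ≤ n) (q e : ℕ)
    (hq : (completeM (conf (n - 1)))[q]? = some ((e + 1, 0), true)) :
    (complete (conf (n - 1)) ++ [(0, 0)]).length = q + 1 + (e + 1) ∧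
    (∀ d < e + 1,
      ((complete (conf (n - 1)) ++ [(0, 0)]).map Prod.fst)[q + 1 + d]? = some (e - d)) ∧
    (conf n).length = q + 1 + (e + 1) ∧
    (∀ d < e + 1, ((conf n).map Prod.fst)[q + 1 + d]? = some (e - d)) := by
  match n, hn with
  | 1, _ =>
      exfalso
      simp [conf, completeM] at hq
  | (n + 2), _ =>
      obtain ⟨k, m, hm, hσ⟩ := conf_char (n + 1) (by omega)
      obtain ⟨A, j, h⟩ := completeM_g k m hm
      have hσc : completeM (conf (n + 2 - 1)) =
          A.map (fun p => (p, false)) ++ trueDesc j := by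
        simpa [hσ] using h
      rw [hσc] at hq
      by_cases hqA : q < A.length
      · exfalso
        rw [List.getElem?_append_left (by simpa using hqA), List.getElem?_map] at hq
        rcases hA : A[q]? with _ | p
        · rw [hA] at hq; simp at hq
        · rw [hA] at hq; simp at hq
      · have hq2 : (trueDesc j)[q - A.length]? = some ((e + 1, 0), true) := by
          rw [List.getElem?_append_right (by simpa using not_lt.mp hqA)] at hq
          simpa using hq
        set r := q - A.length with hr
        have hrj : r < j := by
          by_contra hcon
          rw [List.getElem?_eq_none (by rw [trueDesc_length]; omega)] at hq2
          simp at hq2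
        rw [trueDesc_getElem? j r hrj] at hq2
        have hje : j - r = e + 1 := by
          have := Option.some.inj hq2
          exact congrArg (fun x => x.1.1) this
        have hqr : q = A.length + r := by omega
        have hj : j = r + e + 1 := by omega
        have hcs : complete (conf (n + 2 - 1)) ++ [((0:ℕ), (0:ℕ))] = A ++ zdesc j := by
          rw [complete_eq_map_completeM, hσc, List.map_append, List.append_assoc]
          congr 1
          · simp [Function.comp_def]
          · exact trueDesc_fst_append j
        have hlen : (complete (conf (n + 2 - 1)) ++ [((0:ℕ), (0:ℕ))]).length
            = q + 1 + (e + 1) := by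
          rw [hcs]
          simp [zdesc_length]
          omega
        have hexp : ∀ d < e + 1,
            ((complete (conf (n + 2 - 1)) ++ [((0:ℕ), (0:ℕ))]).map Prod.fst)[q + 1 + d]?
              = some (e - d) := by
          intro d hd
          rw [hcs, List.map_append,
            List.getElem?_append_right (by simp; omega)]
          have hidx : q + 1 + d - (A.map Prod.fst).length = r + 1 + d := by
            simp; omega
          rw [hidx, zdesc_fst_getElem? j (r + 1 + d) (by omega)]
          congr 1
          omega
        have hconf : conf (n + 2) = start (complete (conf (n + 2 - 1)) ++ [((0:ℕ), (0:ℕ))]) := by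
          rfl
        refine ⟨hlen, hexp, ?_, ?_⟩
        · rw [hconf, start_length, hlen]
        · intro d hd
          rw [hconf, start_map_fst]
          exact hexp d hd
end

section
/- Let σ₀ = [] and σ_n = step(σ_{n−1}) for n ≥ 1 in the deamortized log-structured merging process. For every n ≥ 0, the configuration σ_n satisfies: (i) no three consecutive entries of σ_n have equal exponents (there are never more than two adjacent segments of the same size); (ii) for each natural number e, at most one entry of σ_n has exponent e and a nonzero counter (at most one merge is in progress per segment size); and (iii) the exponents of the entries of σ_n are non-increasing from left to right. -/
/-!
After `2 ^ k - 1 + r` steps, with `r < 2 ^ k`, the configuration is `layout k r`: read from the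
largest size down, level `j = k - 1, …, 0` holds one segment of size `2 ^ j`, followed by a
second one, the right half of a pending merge, exactly when bit `j` of `r` is set. One step
turns `layout k r` into `layout k (r + 1)`, the carry of the increment being the cascade of
merges that `complete` finishes; at `r = 2 ^ k - 1` it overflows into `layout (k + 1) 0`.
All three properties are then visible on the explicit form: each level contributes at most two
segments, only the second carries a nonzero counter, and the levels decrease.
-/

lemma complete_cons {e c : ℕ} {X : List (ℕ × ℕ)} (h : ∀ y ∈ X.head?, y.2 ≠ 1) :
    complete ((e, c) :: X) = (e, c - 1) :: complete X := by
  match X, h with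
  | [], _ => simp [complete]
  | (e', c') :: L, h => rw [complete, if_neg (h _ rfl)]

lemma complete_cons_cons_one (x : ℕ × ℕ) (e : ℕ) (L : List (ℕ × ℕ)) :
    complete (x :: (e, 1) :: L) = (e + 1, 0) :: complete L := by
  obtain ⟨_, _⟩ := x
  rw [complete, if_pos rfl]

lemma start_cons_cons {e₁ c₁ e₂ c₂ : ℕ} {L : List (ℕ × ℕ)}
    (h : ¬(e₁ = e₂ ∧ c₁ = 0 ∧ c₂ = 0)) :
    start ((e₁, c₁) :: (e₂, c₂) :: L) = (e₁, c₁) :: start ((e₂, c₂) :: L) := by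
  rw [start, if_neg h]

lemma start_cons {e c : ℕ} {X : List (ℕ × ℕ)}
    (h : ∀ y ∈ X.head?, ¬(e = y.1 ∧ c = 0 ∧ y.2 = 0)) :
    start ((e, c) :: X) = (e, c) :: start X := by
  match X, h with
  | [], _ => rw [start, start]
  | (_, _) :: _, h => exact start_cons_cons (h _ rfl)

lemma start_cons_cons_self (e : ℕ) (L : List (ℕ × ℕ)) :
    start ((e, 0) :: (e, 0) :: L) = (e, 0) :: (e, 2 ^ e) :: start L := by
  rw [start, if_pos ⟨rfl, rfl, rfl⟩]

lemma head?_start (L : List (ℕ × ℕ)) : (start L).head? = L.head? := by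
  match L with
  | [] => rfl
  | [_] => rfl
  | (e₁, c₁) :: (e₂, c₂) :: L =>
    rw [start]
    split_ifs with h
    · simp [h.2.1]
    · rfl

/-- The configuration after `2 ^ k - 1 + r` steps (for `r < 2 ^ k`); the counter
`2 ^ (k + 1) - r` is the number of steps until the pending merge at level `k` completes. -/
def layout : ℕ → ℕ → List (ℕ × ℕ)
  | 0, _ => []
  | k + 1, r =>
    if r < 2 ^ k then (k, 0) :: layout k r
    else (k, 0) :: (k, 2 ^ (k + 1) - r) :: layout k (r - 2 ^ k)

section Layout

variable {k r : ℕ}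

lemma layout_succ_of_lt (h : r < 2 ^ k) : layout (k + 1) r = (k, 0) :: layout k r := by
  rw [layout, if_pos h]

lemma layout_succ_of_le (h : 2 ^ k ≤ r) :
    layout (k + 1) r = (k, 0) :: (k, 2 ^ (k + 1) - r) :: layout k (r - 2 ^ k) := by
  rw [layout, if_neg (not_lt.mpr h)]

lemma fst_lt_of_mem_layout {y : ℕ × ℕ} (hy : y ∈ layout k r) : y.1 < k := by
  induction k generalizing r with
  | zero => simp [layout] at hy
  | succ k ih =>
    rw [layout] at hy
    split_ifs at hy <;> simp only [List.mem_cons] at hy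
    · rcases hy with rfl | hy
      exacts [Nat.lt_succ_self k, (ih hy).trans (Nat.lt_succ_self k)]
    · rcases hy with rfl | rfl | hy
      exacts [Nat.lt_succ_self k, Nat.lt_succ_self k, (ih hy).trans (Nat.lt_succ_self k)]

lemma snd_eq_zero_of_mem_head?_layout {y : ℕ × ℕ} (hy : y ∈ (layout k r).head?) :
    y.2 = 0 := by
  cases k with
  | zero => simp [layout] at hy
  | succ k =>
    rw [layout] at hy
    split_ifs at hy <;> simp only [List.head?_cons, Option.mem_def, Option.some.injEq] at hy <;>
      simp [← hy]

lemma fst_ne_of_mem_head?_layout {y : ℕ × ℕ} (hy : y ∈ (layout k r).head?) : y.1 ≠ k :=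
  (fst_lt_of_mem_layout (List.mem_of_mem_head? hy)).ne

lemma start_layout (hr : r < 2 ^ k) : start (layout k r) = layout k r := by
  induction k generalizing r with
  | zero => rfl
  | succ k ih =>
    have hpow : 2 ^ (k + 1) = 2 * 2 ^ k := by ring
    by_cases h : r < 2 ^ k
    · rw [layout_succ_of_lt h, start_cons fun y hy hpair =>
        fst_ne_of_mem_head?_layout hy hpair.1.symm, ih h]
    · rw [layout_succ_of_le (not_lt.mp h), start_cons_cons fun hpair => by omega,
        start_cons fun _ _ hpair => by omega, ih (by omega)]

lemma complete_layout_pow_sub_one_append :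
    complete (layout k (2 ^ k - 1)) ++ [(0, 0)] = layout (k + 1) 0 := by
  induction k with
  | zero => rfl
  | succ k ih =>
    have hpow : 2 ^ (k + 1) = 2 * 2 ^ k := by ring
    have hk : 0 < 2 ^ k := by positivity
    rw [layout_succ_of_le (by omega), show 2 ^ (k + 1) - (2 ^ (k + 1) - 1) = 1 by omega,
      complete_cons_cons_one, show 2 ^ (k + 1) - 1 - 2 ^ k = 2 ^ k - 1 by omega,
      List.cons_append, ih, layout_succ_of_lt (k := k + 1) (by positivity)]

lemma step_layout_pow_sub_one : step (layout k (2 ^ k - 1)) = layout (k + 1) 0 := by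
  rw [step, complete_layout_pow_sub_one_append, start_layout (by positivity)]

lemma step_layout_of_succ_lt (h : r + 1 < 2 ^ k) : step (layout k r) = layout k (r + 1) := by
  induction k generalizing r with
  | zero => simp at h
  | succ k ih =>
    have hpow : 2 ^ (k + 1) = 2 * 2 ^ k := by ring
    have complete_cons_layout (e c s : ℕ) :
        complete ((e, c) :: layout k s) = (e, c - 1) :: complete (layout k s) :=
      complete_cons fun y hy => by simp [snd_eq_zero_of_mem_head?_layout hy]
    unfold step at ih ⊢
    by_cases hr : r < 2 ^ k
    · rw [layout_succ_of_lt hr, complete_cons_layout, Nat.zero_sub, List.cons_append]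
      by_cases hr' : r + 1 < 2 ^ k
      · have hhead : ∀ y ∈ (complete (layout k r) ++ [(0, 0)]).head?, y.1 ≠ k := by
          rw [← head?_start, ih hr']
          exact fun y hy => fst_ne_of_mem_head?_layout hy
        rw [start_cons fun y hy hpair => hhead y hy hpair.1.symm, ih hr',
          layout_succ_of_lt hr']
      · -- the carry reaches level `k`: the merge completed below pairs with the segment here
        obtain rfl : r = 2 ^ k - 1 := by omega
        rw [complete_layout_pow_sub_one_append, layout_succ_of_lt (by positivity),
          start_cons_cons_self, start_layout (by positivity),
          layout_succ_of_le (show 2 ^ k ≤ 2 ^ k - 1 + 1 by omega),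
          show 2 ^ (k + 1) - (2 ^ k - 1 + 1) = 2 ^ k by omega,
          show 2 ^ k - 1 + 1 - 2 ^ k = 0 by omega]
    · rw [layout_succ_of_le (not_lt.mp hr), layout_succ_of_le (by omega),
        complete_cons fun _ hy => by rw [← Option.mem_some_iff.mp hy]; omega,
        complete_cons_layout, Nat.zero_sub, List.cons_append, List.cons_append,
        start_cons_cons fun hpair => by omega, start_cons fun _ _ hpair => by omega,
        ih (by omega), show r - 2 ^ k + 1 = r + 1 - 2 ^ k by omega,
        show 2 ^ (k + 1) - r - 1 = 2 ^ (k + 1) - (r + 1) by omega]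

lemma step_layout (hr : r < 2 ^ k) :
    step (layout k r) = if r + 1 < 2 ^ k then layout k (r + 1) else layout (k + 1) 0 := by
  split_ifs with h
  · exact step_layout_of_succ_lt h
  · obtain rfl : r = 2 ^ k - 1 := by omega
    exact step_layout_pow_sub_one

lemma pairwise_layout : ((layout k r).map Prod.fst).Pairwise (· ≥ ·) := by
  induction k generalizing r with
  | zero => simp [layout]
  | succ k ih =>
    have hlt (s : ℕ) : ∀ b ∈ (layout k s).map Prod.fst, k ≥ b := by
      simp only [List.mem_map]
      rintro _ ⟨y, hy, rfl⟩
      exact (fst_lt_of_mem_layout hy).le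
    by_cases h : r < 2 ^ k
    · rw [layout_succ_of_lt h, List.map_cons, List.pairwise_cons]
      exact ⟨by simpa using hlt r, ih⟩
    · rw [layout_succ_of_le (not_lt.mp h), List.map_cons, List.map_cons, List.pairwise_cons,
        List.pairwise_cons]
      exact ⟨by simpa using hlt _, hlt _, ih⟩

lemma countP_layout_le_one (e : ℕ) :
    (layout k r).countP (fun p => decide (p.1 = e ∧ p.2 ≠ 0)) ≤ 1 := by
  induction k generalizing r with
  | zero => simp [layout]
  | succ k ih =>
    by_cases h : r < 2 ^ k
    · rw [layout_succ_of_lt h, List.countP_cons]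
      simpa using ih
    · rw [layout_succ_of_le (not_lt.mp h), List.countP_cons, List.countP_cons]
      by_cases he : k = e
      · subst he
        have hnone : (layout k (r - 2 ^ k)).countP (fun p => decide (p.1 = k ∧ p.2 ≠ 0)) = 0 :=
          List.countP_eq_zero.mpr fun y hy hyk =>
            (fst_lt_of_mem_layout hy).ne (of_decide_eq_true hyk).1
        rw [hnone]
        split_ifs <;> simp_all
      · simpa [he] using ih

end Layout

def NoThreeAdjacentSameSize (l : List (ℕ × ℕ)) : Prop :=
  ∀ (q : ℕ) (x y z : ℕ × ℕ),
    l[q]? = some x → l[q + 1]? = some y → l[q + 2]? = some z → ¬ (x.1 = y.1 ∧ y.1 = z.1)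

namespace NoThreeAdjacentSameSize

variable {a b : ℕ × ℕ} {L : List (ℕ × ℕ)}

lemma cons (hL : NoThreeAdjacentSameSize L) (ha : ∀ y ∈ L.head?, y.1 ≠ a.1) :
    NoThreeAdjacentSameSize (a :: L) := by
  rintro (_ | q) x y z hx hy hz
  · simp only [List.getElem?_cons_zero, List.getElem?_cons_succ, Option.some.injEq] at hx hy
    subst hx
    rintro ⟨hay, -⟩
    exact ha y (by rwa [List.head?_eq_getElem?]) hay.symm
  · exact hL q x y z hx hy hz

lemma cons_cons (hL : NoThreeAdjacentSameSize (b :: L)) (hb : ∀ y ∈ L.head?, y.1 ≠ b.1) :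
    NoThreeAdjacentSameSize (a :: b :: L) := by
  rintro (_ | q) x y z hx hy hz
  · simp only [List.getElem?_cons_zero, List.getElem?_cons_succ, Option.some.injEq] at hy hz
    subst hy
    rintro ⟨-, hbz⟩
    exact hb z (by rwa [List.head?_eq_getElem?]) hbz.symm
  · exact hL q x y z hx hy hz

end NoThreeAdjacentSameSize

lemma noThreeAdjacentSameSize_layout (k r : ℕ) : NoThreeAdjacentSameSize (layout k r) := by
  induction k generalizing r with
  | zero => simp [NoThreeAdjacentSameSize, layout]
  | succ k ih =>
    have hhead (s : ℕ) : ∀ y ∈ (layout k s).head?, y.1 ≠ k :=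
      fun _ hy => fst_ne_of_mem_head?_layout hy
    by_cases h : r < 2 ^ k
    · rw [layout_succ_of_lt h]
      exact (ih r).cons (hhead r)
    · rw [layout_succ_of_le (not_lt.mp h)]
      exact ((ih _).cons (hhead _)).cons_cons (hhead _)

lemma exists_conf_eq_layout (n : ℕ) : ∃ k r, r < 2 ^ k ∧ conf n = layout k r := by
  induction n with
  | zero => exact ⟨0, 0, Nat.one_pos, rfl⟩
  | succ n ih =>
    obtain ⟨k, r, hr, h⟩ := ih
    rw [conf, h, step_layout hr]
    split_ifs with h'
    · exact ⟨k, r + 1, h', rfl⟩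
    · exact ⟨k + 1, 0, by positivity, rfl⟩

/-- For every `n`, the configuration `σ_n` satisfies:
(i) no three consecutive entries have equal exponents;
(ii) for each `e`, at most one entry has exponent `e` and a nonzero counter;
(iii) the exponents are non-increasing from left to right. -/
theorem stmt_12 (n : ℕ) :
    (∀ (q : ℕ) (x y z : ℕ × ℕ),
      (conf n)[q]? = some x → (conf n)[q + 1]? = some y → (conf n)[q + 2]? = some z →
      ¬ (x.1 = y.1 ∧ y.1 = z.1)) ∧
    (∀ e : ℕ, (conf n).countP (fun p => decide (p.1 = e ∧ p.2 ≠ 0)) ≤ 1) ∧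
    List.Pairwise (· ≥ ·) ((conf n).map Prod.fst) := by
  obtain ⟨k, r, -, hconf⟩ := exists_conf_eq_layout n
  rw [hconf]
  exact ⟨noThreeAdjacentSameSize_layout k r, countP_layout_le_one, pairwise_layout⟩
end
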